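/- arXiv:math/0601052 — 3 statements merged into one kernel-verified Lean document; each statement's English description precedes it below -/
import Mathlib

section
/- Let $F$ be a number field. Suppose there exists $f \in F \otimes_{\mathbb{Q}} \mathbb{R}$ such that $\mathrm{Tr}_{(F \otimes_{\mathbb{Q}} \mathbb{R})/\mathbb{R}}(f \cdot x^2) > 0$ for every nonzero $x \in F \otimes_{\mathbb{Q}} \mathbb{R}$. Then $F$ is totally real. -/
/-! The twisted trace form `⟨x, y⟩ = Tr(f x y)` is a real inner product on `F ⊗ ℝ` for which every
multiplication operator is self-adjoint, so the characteristic polynomial of multiplication by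
`a ⊗ 1` splits over `ℝ`. An embedding `σ` extends to an `ℝ`-algebra map `F ⊗ ℝ → ℂ` sending
`a ⊗ 1` to `σ a`, which by Cayley–Hamilton is a root of that polynomial, hence real. -/

open scoped TensorProduct
open Polynomial

attribute [local instance] Algebra.TensorProduct.rightAlgebra

namespace Algebra

theorem aeval_charpoly_lmul_self {R A : Type*} [CommRing R] [CommRing A] [Algebra R A]
    [Module.Free R A] [Module.Finite R A] (c : A) : aeval c (lmul R A c).charpoly = 0 := by
  apply lmul_injective (R := R)
  rw [← aeval_algHom_apply, LinearMap.aeval_self_charpoly, map_zero]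

variable {A : Type*} [CommRing A] [Algebra ℝ A]

noncomputable abbrev traceFormInnerProductCore (f : A)
    (hf : ∀ x : A, x ≠ 0 → 0 < trace ℝ A (f * x ^ 2)) : InnerProductSpace.Core ℝ A where
  inner x y := trace ℝ A (f * x * y)
  conj_inner_symm x y := by simp only [starRingEnd_apply, star_trivial, mul_right_comm]
  re_inner_nonneg x := by
    rcases eq_or_ne x 0 with rfl | hx
    · simp
    · simpa [sq, mul_assoc] using (hf x hx).le
  add_left x y z := by simp only [mul_add, add_mul, map_add]
  smul_left x y r := by
    simp only [starRingEnd_apply, star_trivial, mul_smul_comm, smul_mul_assoc, map_smul,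
      smul_eq_mul]
  definite x hx := by
    by_contra h
    exact (hf x h).ne' (by simpa [sq, mul_assoc] using hx)

theorem splits_charpoly_lmul_of_trace_mul_sq_pos [Module.Finite ℝ A] (f : A)
    (hf : ∀ x : A, x ≠ 0 → 0 < trace ℝ A (f * x ^ 2)) (c : A) :
    (lmul ℝ A c).charpoly.Splits := by
  let core := traceFormInnerProductCore f hf
  let _ : NormedAddCommGroup A := core.toNormedAddCommGroup
  let _ : InnerProductSpace ℝ A := .ofCore core.toCore
  have hc : (lmul ℝ A c).IsSymmetric := fun x y => by
    change trace ℝ A (f * (c * x) * y) = trace ℝ A (f * x * (c * y))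
    ring_nf
  exact hc.splits_charpoly

end Algebra

theorem AlgHom.mem_range_of_splits_charpoly_lmul {K A B : Type*} [Field K] [CommRing A]
    [Algebra K A] [Module.Finite K A] [CommRing B] [IsDomain B] [Algebra K B] (φ : A →ₐ[K] B)
    {c : A} (hc : (Algebra.lmul K A c).charpoly.Splits) : φ c ∈ (algebraMap K B).range := by
  refine hc.mem_range_of_isRoot (LinearMap.charpoly_monic _).ne_zero ?_
  rw [IsRoot, eval_map_algebraMap, aeval_algHom_apply, Algebra.aeval_charpoly_lmul_self, map_zero]

instance Module.Finite.tensorProduct_right {R S T : Type*} [CommRing R] [CommRing S] [CommRing T]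
    [Algebra R S] [Algebra R T] [Module.Finite R S] : Module.Finite T (S ⊗[R] T) :=
  .equiv (Algebra.IsPushout.equiv R T S (S ⊗[R] T)).toLinearEquiv

noncomputable def RingHom.tensorRealLift {F : Type*} [CommRing F] [Algebra ℚ F] (σ : F →+* ℂ) :
    F ⊗[ℚ] ℝ →ₐ[ℝ] ℂ :=
  (Algebra.TensorProduct.lift (Algebra.ofId ℝ ℂ) σ.toRatAlgHom fun _ _ => Commute.all _ _).comp
    (Algebra.IsPushout.equiv ℚ ℝ F (F ⊗[ℚ] ℝ)).symm

theorem RingHom.tensorRealLift_tmul_one {F : Type*} [CommRing F] [Algebra ℚ F] (σ : F →+* ℂ)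
    (a : F) : σ.tensorRealLift (a ⊗ₜ 1) = σ a := by
  change σ.tensorRealLift (algebraMap F _ a) = σ a
  rw [RingHom.tensorRealLift, AlgHom.comp_apply, AlgEquiv.coe_toAlgHom,
    Algebra.IsPushout.equiv_symm_algebraMap_right]
  simp

theorem stmt_5 (F : Type*) [Field F] [NumberField F]
    (f : F ⊗[ℚ] ℝ)
    (hf : ∀ x : F ⊗[ℚ] ℝ, x ≠ 0 → 0 < Algebra.trace ℝ (F ⊗[ℚ] ℝ) (f * x ^ 2)) :
    ∀ σ : F →+* ℂ, ∀ a : F, (σ a).im = 0 := by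
  intro σ a
  obtain ⟨r, hr⟩ := σ.tensorRealLift.mem_range_of_splits_charpoly_lmul
    (Algebra.splits_charpoly_lmul_of_trace_mul_sq_pos f hf (a ⊗ₜ 1))
  rw [← σ.tensorRealLift_tmul_one, ← hr, Complex.coe_algebraMap, Complex.ofReal_im]
end

section
/- Let $S$ be a finite set with a fixed-point-free involution $\sigma \mapsto \bar{\sigma}$, and let $n \geq 0$. Every function $\varphi : S \to \mathbb{Z}$ with $\varphi \geq 0$ and $\varphi(\sigma) + \varphi(\bar{\sigma}) = n$ for all $\sigma$ can be written as a sum $\varphi = \chi_{T_1} + \cdots + \chi_{T_n}$ of characteristic functions of subsets $T_i \subseteq S$ each satisfying $S = T_i \sqcup \bar{T_i}$. -/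
lemma exists_selector {S : Type*} (bar : S → S)
    (hinv : ∀ s, bar (bar s) = s) (hfp : ∀ s, bar s ≠ s) :
    ∃ C : S → Prop, ∀ σ, Xor' (C σ) (C (bar σ)) := by
  classical
  let r : S → S → Prop := fun σ τ => τ = σ ∨ τ = bar σ
  have hr : Equivalence r := by
    constructor
    · intro x; left; rfl
    · intro x y h
      rcases h with h | h
      · left; exact h.symm
      · right; rw [h, hinv]
    · intro x y z h1 h2
      rcases h1 with h1 | h1 <;> rcases h2 with h2 | h2 <;> subst h1 <;> subst h2
      · left; rfl
      · right; rfl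
      · right; rfl
      · left; exact hinv x
  let s : Setoid S := ⟨r, hr⟩
  refine ⟨fun σ => (Quotient.mk s σ).out = σ, fun σ => ?_⟩
  have hmk : Quotient.mk s (bar σ) = Quotient.mk s σ :=
    Quotient.sound (Or.inr (hinv σ).symm)
  have hout : σ = (Quotient.mk s σ).out ∨ σ = bar (Quotient.mk s σ).out :=
    Quotient.exact ((Quotient.mk s σ).out_eq)
  rcases hout with h | h
  · refine Or.inl ⟨h.symm, ?_⟩
    show (Quotient.mk s (bar σ)).out ≠ bar σ
    rw [hmk, ← h]
    exact fun hc => hfp σ hc.symm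
  · have hb : bar σ = (Quotient.mk s σ).out := by
      conv_lhs => rw [h]
      rw [hinv]
    have h' : (Quotient.mk s σ).out = bar σ := hb.symm
    have h2 : (Quotient.mk s (bar σ)).out = bar σ := by rw [hmk]; exact h'
    refine Or.inr ⟨h2, ?_⟩
    show (Quotient.mk s σ).out ≠ σ
    rw [h']
    exact hfp σ

theorem stmt_10 (S : Type*) [Fintype S] [DecidableEq S] (bar : S → S)
    (hinv : ∀ s, bar (bar s) = s) (hfp : ∀ s, bar s ≠ s)
    (n : ℕ) (φ : S → ℤ)
    (hφ0 : ∀ σ, 0 ≤ φ σ) (hφ : ∀ σ, φ σ + φ (bar σ) = n) :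
    ∃ T : Fin n → Finset S,
      (∀ i, ∀ σ, Xor' (σ ∈ T i) (bar σ ∈ T i)) ∧
      (∀ σ, φ σ = ∑ i, (if σ ∈ T i then 1 else 0)) := by
  classical
  obtain ⟨C, hC⟩ := exists_selector bar hinv hfp
  induction n generalizing φ with
  | zero =>
    refine ⟨Fin.elim0, fun i => i.elim0, fun σ => ?_⟩
    have h1 := hφ σ
    have h2 := hφ0 σ
    have h3 := hφ0 (bar σ)
    simp only [Finset.univ_eq_empty, Finset.sum_empty]
    omega
  | succ n ih =>
    set T₀ : Finset S :=
      Finset.univ.filter (fun σ => φ (bar σ) < φ σ ∨ (φ σ = φ (bar σ) ∧ C σ)) with hT₀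
    have hmem : ∀ σ, σ ∈ T₀ ↔ (φ (bar σ) < φ σ ∨ (φ σ = φ (bar σ) ∧ C σ)) := by
      intro σ; simp [hT₀]
    have hxor0 : ∀ σ, Xor' (σ ∈ T₀) (bar σ ∈ T₀) := by
      intro σ
      have h1 := hmem σ
      have h2 := hmem (bar σ)
      rw [hinv] at h2
      have hc := hC σ
      rcases lt_trichotomy (φ (bar σ)) (φ σ) with h | h | h
      · refine Or.inl ⟨h1.mpr (Or.inl h), fun hb => ?_⟩
        rcases h2.mp hb with h' | h' <;> omega
      · rcases hc with ⟨hc1, hc2⟩ | ⟨hc1, hc2⟩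
        · refine Or.inl ⟨h1.mpr (Or.inr ⟨h.symm, hc1⟩), fun hb => ?_⟩
          rcases h2.mp hb with h' | h'
          · omega
          · exact hc2 h'.2
        · refine Or.inr ⟨h2.mpr (Or.inr ⟨h, hc1⟩), fun ha => ?_⟩
          rcases h1.mp ha with h' | h'
          · omega
          · exact hc2 h'.2
      · refine Or.inr ⟨h2.mpr (Or.inl h), fun ha => ?_⟩
        rcases h1.mp ha with h' | h' <;> omega
    set φ' : S → ℤ := fun σ => φ σ - (if σ ∈ T₀ then 1 else 0) with hφ'
    have hge1 : ∀ σ, σ ∈ T₀ → 1 ≤ φ σ := by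
      intro σ hσ
      have := hφ σ
      have := hφ0 (bar σ)
      rcases (hmem σ).mp hσ with h | h <;> omega
    have hφ'0 : ∀ σ, 0 ≤ φ' σ := by
      intro σ
      simp only [hφ']
      split
      · have := hge1 σ (by assumption); omega
      · have := hφ0 σ; omega
    have hφ'n : ∀ σ, φ' σ + φ' (bar σ) = n := by
      intro σ
      have h := hφ σ
      have hx := hxor0 σ
      simp only [hφ']
      rcases hx with ⟨h1, h2⟩ | ⟨h1, h2⟩ <;> simp [h1, h2] <;> omega
    obtain ⟨T', hT'1, hT'2⟩ := ih φ' hφ'0 hφ'n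
    refine ⟨Fin.cons T₀ T', fun i => ?_, fun σ => ?_⟩
    · refine Fin.cases ?_ ?_ i
      · exact hxor0
      · exact hT'1
    · rw [Fin.sum_univ_succ]
      simp only [Fin.cons_zero, Fin.cons_succ]
      have := hT'2 σ
      simp only [hφ'] at this
      omega
end

section
/- Let $F$ be a number field that is not totally real, with a fixed nonreal embedding $\tau : F \to \mathbb{C}$, and let real numbers $\theta$ and $\epsilon > 0$ and $M > 0$ be given. Then there exists $x \in F$ such that $|\sigma(x)| < \epsilon$ for every embedding $\sigma : F \to \mathbb{C}$ with $\sigma \neq \tau$ and $\sigma \neq \bar{\tau}$, while $|\tau(x)| > M$ and the argument of $\tau(x)$ lies within $\epsilon$ of $\theta$. -/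
/-!
By weak approximation, `F` is dense in `ℝ^r₁ × ℂ^r₂` under the mixed embedding. Take the point
which is `0` at every place except the complex place of `τ`, where it is `r e^{iθ}` (or its
conjugate) for some `r > M`. The required conditions hold on a neighbourhood of this point:
after rotating by `e^{-iθ}` the centre lies on the positive real axis, where `arg` is continuous.
So some `x ∈ F` satisfies them.
-/

open Filter Topology NumberField NumberField.mixedEmbedding NumberField.InfinitePlace

theorem NumberField.denseRange_mixedEmbedding (K : Type*) [Field K] [NumberField K] :
    DenseRange (mixedEmbedding K) := by
  have hcont : Continuous (InfiniteAdeleRing.ringEquiv_mixedSpace K) :=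
    .prodMk (continuous_pi fun v ↦
        (Completion.isometry_extensionEmbeddingOfIsReal v.2).continuous.comp (continuous_apply _))
      (continuous_pi fun v ↦
        (Completion.isometry_extensionEmbedding v.1).continuous.comp (continuous_apply _))
  convert (InfiniteAdeleRing.ringEquiv_mixedSpace K).surjective.denseRange.comp
    (InfiniteAdeleRing.denseRange_algebraMap K) hcont using 1
  exact funext fun _ ↦ InfiniteAdeleRing.mixedEmbedding_eq_algebraMap_comp K

namespace NumberField.InfinitePlace

variable {K : Type*} [Field K] [NumberField K]

theorem exists_embedding_mem_and_lt_of_isComplex {w : InfinitePlace K} (hw : w.IsComplex)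
    {z : ℂ} {U : Set ℂ} (hU : U ∈ 𝓝 z) {ε : ℝ} (hε : 0 < ε) :
    ∃ x : K, w.embedding x ∈ U ∧ ∀ v ≠ w, v x < ε := by
  classical
  set y₀ : mixedSpace K := (0, Pi.single ⟨w, hw⟩ z)
  have hy₀ : ∀ v ≠ w, normAtPlace v y₀ = 0 := by
    intro v hv
    rcases v.isReal_or_isComplex with hv' | hv'
    · simp [y₀, normAtPlace_apply_of_isReal hv']
    · simp [y₀, normAtPlace_apply_of_isComplex hv', Subtype.ext_iff, hv]
  have hnear : ∀ᶠ y in 𝓝 y₀, y.2 ⟨w, hw⟩ ∈ U ∧ ∀ v ≠ w, normAtPlace v y < ε := by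
    refine .and (((continuous_apply _).comp continuous_snd).continuousAt.preimage_mem_nhds
      (by simpa [y₀] using hU)) (eventually_all.2 fun v ↦ ?_)
    by_cases hv : v = w
    · exact .of_forall fun _ h ↦ absurd hv h
    · refine ((continuous_normAtPlace v).continuousAt.eventually_lt continuousAt_const ?_).mono
        fun _ h _ ↦ h
      rwa [hy₀ v hv]
  obtain ⟨_, ⟨x, rfl⟩, hx⟩ := (denseRange_mixedEmbedding K).inter_nhds_nonempty hnear
  exact ⟨x, hx.1, fun v hv ↦ by simpa [normAtPlace_apply] using hx.2 v hv⟩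

theorem exists_mem_and_lt_of_not_isReal {φ : K →+* ℂ} (hφ : ¬ ComplexEmbedding.IsReal φ)
    {z : ℂ} {U : Set ℂ} (hU : U ∈ 𝓝 z) {ε : ℝ} (hε : 0 < ε) :
    ∃ x : K, φ x ∈ U ∧ ∀ v ≠ mk φ, v x < ε := by
  have hw : (mk φ).IsComplex := isComplex_mk_iff.2 hφ
  rcases embedding_mk_eq φ with h | h
  · simpa only [h] using exists_embedding_mem_and_lt_of_isComplex hw hU hε
  · have hU' : (starRingEnd ℂ) ⁻¹' U ∈ 𝓝 ((starRingEnd ℂ) z) :=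
      Complex.continuous_conj.continuousAt.preimage_mem_nhds (by simpa using hU)
    obtain ⟨x, hx, hxv⟩ := exists_embedding_mem_and_lt_of_isComplex hw hU' hε
    exact ⟨x, by simpa [h, ComplexEmbedding.conjugate_coe_eq] using hx, hxv⟩

end NumberField.InfinitePlace

namespace Complex

theorem eventually_exists_abs_sub_lt_eq_norm_mul_exp {r : ℝ} (hr : 0 < r) (θ : ℝ) {ε : ℝ}
    (hε : 0 < ε) :
    ∀ᶠ z in 𝓝 (r * exp (θ * I)), ∃ θ' : ℝ, |θ' - θ| < ε ∧ z = ‖z‖ * exp (θ' * I) := by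
  have hrot : Tendsto (fun z ↦ z * exp (-θ * I)) (𝓝 (r * exp (θ * I))) (𝓝 (r : ℂ)) := by
    have := (continuous_mul_const (exp (-θ * I))).tendsto (r * exp (θ * I))
    rwa [mul_assoc, ← exp_add, show θ * I + -θ * I = (0 : ℂ) by ring, exp_zero, mul_one] at this
  have harg : ∀ᶠ w in 𝓝 (r : ℂ), |arg w| < ε := by
    refine (continuousAt_arg (ofReal_mem_slitPlane.2 hr)).eventually
      (?_ : ∀ᶠ t in 𝓝 (arg r), |t| < ε)
    rw [arg_ofReal_of_nonneg hr.le]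
    exact (eventually_abs_sub_lt 0 hε).mono fun t ht ↦ by simpa using ht
  refine (hrot.eventually harg).mono fun z hz ↦ ⟨θ + arg (z * exp (-θ * I)), by simpa using hz, ?_⟩
  set w := z * exp (-θ * I)
  have hnorm : ‖w‖ = ‖z‖ := by simp [w, norm_exp]
  calc z = ‖w‖ * exp (arg w * I) * exp (θ * I) := by
        rw [norm_mul_exp_arg_mul_I, mul_assoc, ← exp_add, neg_mul, neg_add_cancel, exp_zero,
          mul_one]
    _ = ‖z‖ * exp (↑(θ + arg w) * I) := by
        rw [hnorm, mul_assoc, ← exp_add]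
        push_cast
        ring_nf

end Complex

theorem stmt_17 (F : Type*) [Field F] [NumberField F]
    (τ : F →+* ℂ) (hτ : ∃ x : F, (τ x).im ≠ 0)
    (θ ε M : ℝ) (hε : 0 < ε) (hM : 0 < M) :
    ∃ x : F,
      (∀ σ : F →+* ℂ, σ ≠ τ → σ ≠ (starRingEnd ℂ).comp τ → ‖σ x‖ < ε) ∧
      M < ‖τ x‖ ∧
      ∃ θ' : ℝ, |θ' - θ| < ε ∧
        τ x = (‖τ x‖ : ℂ) * Complex.exp (θ' * Complex.I) := by
  have hτ_real : ¬ ComplexEmbedding.IsReal τ := by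
    obtain ⟨x, hx⟩ := hτ
    exact fun h ↦
      hx (Complex.conj_eq_iff_im.1 (RingHom.congr_fun (ComplexEmbedding.isReal_iff.1 h) x))
  obtain ⟨r, hMr, hr⟩ : ∃ r : ℝ, M < r ∧ 0 < r := ⟨M + 1, lt_add_one M, by linarith⟩
  have hU : ∀ᶠ z in 𝓝 ((r : ℂ) * Complex.exp (θ * Complex.I)), M < ‖z‖ ∧
      ∃ θ' : ℝ, |θ' - θ| < ε ∧ z = ‖z‖ * Complex.exp (θ' * Complex.I) := by
    refine .and (continuousAt_const.eventually_lt continuous_norm.continuousAt ?_)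
      (Complex.eventually_exists_abs_sub_lt_eq_norm_mul_exp hr θ hε)
    rwa [norm_mul, Complex.norm_exp_ofReal_mul_I, mul_one, Complex.norm_of_nonneg hr.le]
  obtain ⟨x, hxτ, hxv⟩ := exists_mem_and_lt_of_not_isReal hτ_real hU hε
  refine ⟨x, fun σ hστ hστ' ↦ hxv (mk σ) fun h ↦ ?_, hxτ⟩
  rcases mk_eq_iff.1 h.symm with h' | h'
  · exact hστ h'.symm
  · exact hστ' h'.symm
end
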